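/- With z(t,x;b,y) = ((t-b)^2-(y-x)^2)/((t+b+2)^2-(y-x)^2), t > -1, b > -1, D = (t+b+2)^2-(y-x)^2 ≠ 0, and any real parameter √δ (denoted s), the combination ∂²z/∂t² − ∂²z/∂x² + (1−s)(1+t)^{-1}∂z/∂t + 2(s−1)D^{-1}[(t+b+2)∂z/∂t − (y−x)∂z/∂x] equals 4(1+b)[1−(2−s)z] / ((1+t)D). -/

import Mathlib

/-!
Since `(t + b + 2)^2 - (t - b)^2 = 4 (1 + t)(1 + b)`, off `D = 0` we have
`z = 1 - 4 (1 + b)(1 + t) / D`, whence `∂z/∂t = 4 (1 + b)((1 + t)^2 + (y - x)^2 - (1 + b)^2) / D^2`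
and `∂z/∂x = 8 (1 + b)(1 + t)(y - x) / D^2`. These formulas hold on the open set `D ≠ 0`, so
differentiating them once more gives the second partials, and the claimed identity becomes a
polynomial identity once `D` and `1 + t` are cleared.
-/

noncomputable def zfun (t x b y : ℝ) : ℝ :=
  ((t - b)^2 - (y - x)^2) / ((t + b + 2)^2 - (y - x)^2)

open Topology

theorem deriv_deriv_eq_of_eventually_hasDerivAt {f f' : ℝ → ℝ} {f'' x : ℝ}
    (hf : ∀ᶠ u in 𝓝 x, HasDerivAt f (f' u) u) (hf' : HasDerivAt f' f'' x) :
    deriv (deriv f) x = f'' :=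
  (hf'.congr_of_eventuallyEq (hf.mono fun _ hu => hu.deriv)).deriv

theorem HasDerivAt.sq_sub_sq {f g : ℝ → ℝ} {f' g' u : ℝ} (hf : HasDerivAt f f' u)
    (hg : HasDerivAt g g' u) :
    HasDerivAt (fun u => f u ^ 2 - g u ^ 2) (2 * (f u * f' - g u * g')) u :=
  ((hf.fun_pow 2).sub (hg.fun_pow 2)).congr_deriv (by push_cast; ring)

noncomputable def zfunDt (t x b y : ℝ) : ℝ :=
  4 * (1 + b) * ((1 + t)^2 + (y - x)^2 - (1 + b)^2) / ((t + b + 2)^2 - (y - x)^2)^2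

noncomputable def zfunDx (t x b y : ℝ) : ℝ :=
  8 * (1 + b) * (1 + t) * (y - x) / ((t + b + 2)^2 - (y - x)^2)^2

section

variable {t x b y : ℝ}

theorem zfun_eq_one_sub (hD : (t + b + 2)^2 - (y - x)^2 ≠ 0) :
    zfun t x b y = 1 - 4 * (1 + b) * (1 + t) / ((t + b + 2)^2 - (y - x)^2) := by
  rw [zfun, eq_sub_iff_add_eq, ← add_div, div_eq_one_iff_eq hD]
  ring

theorem hasDerivAt_zfun_fst (hD : (t + b + 2)^2 - (y - x)^2 ≠ 0) :
    HasDerivAt (fun t' => zfun t' x b y) (zfunDt t x b y) t := by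
  have hyx := hasDerivAt_const t (y - x)
  refine ((((hasDerivAt_id' t).sub_const b).sq_sub_sq hyx).fun_div
    ((((hasDerivAt_id' t).add_const b).add_const 2).sq_sub_sq hyx) hD).congr_deriv ?_
  rw [zfunDt]
  congr 1
  ring

theorem hasDerivAt_zfun_snd (hD : (t + b + 2)^2 - (y - x)^2 ≠ 0) :
    HasDerivAt (fun x' => zfun t x' b y) (zfunDx t x b y) x := by
  have hyx := (hasDerivAt_id' x).const_sub y
  refine (((hasDerivAt_const x (t - b)).sq_sub_sq hyx).fun_div
    ((hasDerivAt_const x (t + b + 2)).sq_sub_sq hyx) hD).congr_deriv ?_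
  rw [zfunDx]
  congr 1
  ring

theorem hasDerivAt_zfunDt_fst (hD : (t + b + 2)^2 - (y - x)^2 ≠ 0) :
    HasDerivAt (fun t' => zfunDt t' x b y)
      (8 * (1 + b) * ((1 + t) * ((t + b + 2)^2 - (y - x)^2)
          - 2 * (t + b + 2) * ((1 + t)^2 + (y - x)^2 - (1 + b)^2))
        / ((t + b + 2)^2 - (y - x)^2)^3) t := by
  have hnum := ((((hasDerivAt_id' t).const_add 1).fun_pow 2).add_const ((y - x)^2)
    |>.sub_const ((1 + b)^2)).const_mul (4 * (1 + b))
  have hden := ((((hasDerivAt_id' t).add_const b).add_const 2).sq_sub_sq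
    (hasDerivAt_const t (y - x))).fun_pow 2
  refine (hnum.fun_div hden (pow_ne_zero 2 hD)).congr_deriv ?_
  field_simp
  ring

theorem hasDerivAt_zfunDx_snd (hD : (t + b + 2)^2 - (y - x)^2 ≠ 0) :
    HasDerivAt (fun x' => zfunDx t x' b y)
      (-8 * (1 + b) * (1 + t) * ((t + b + 2)^2 - (y - x)^2 + 4 * (y - x)^2)
        / ((t + b + 2)^2 - (y - x)^2)^3) x := by
  have hyx := (hasDerivAt_id' x).const_sub y
  have hden := ((hasDerivAt_const x (t + b + 2)).sq_sub_sq hyx).fun_pow 2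
  refine ((hyx.const_mul (8 * (1 + b) * (1 + t))).fun_div hden (pow_ne_zero 2 hD)).congr_deriv ?_
  field_simp
  ring

theorem deriv_deriv_zfun_fst (hD : (t + b + 2)^2 - (y - x)^2 ≠ 0) :
    deriv (deriv fun t' => zfun t' x b y) t
      = 8 * (1 + b) * ((1 + t) * ((t + b + 2)^2 - (y - x)^2)
          - 2 * (t + b + 2) * ((1 + t)^2 + (y - x)^2 - (1 + b)^2))
        / ((t + b + 2)^2 - (y - x)^2)^3 := by
  have hD_near : ∀ᶠ u in 𝓝 t, (u + b + 2)^2 - (y - x)^2 ≠ 0 :=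
    (by fun_prop : Continuous fun u : ℝ => (u + b + 2)^2 - (y - x)^2).continuousAt.eventually_ne hD
  exact deriv_deriv_eq_of_eventually_hasDerivAt (hD_near.mono fun _ => hasDerivAt_zfun_fst)
    (hasDerivAt_zfunDt_fst hD)

theorem deriv_deriv_zfun_snd (hD : (t + b + 2)^2 - (y - x)^2 ≠ 0) :
    deriv (deriv fun x' => zfun t x' b y) x
      = -8 * (1 + b) * (1 + t) * ((t + b + 2)^2 - (y - x)^2 + 4 * (y - x)^2)
        / ((t + b + 2)^2 - (y - x)^2)^3 := by
  have hD_near : ∀ᶠ v in 𝓝 x, (t + b + 2)^2 - (y - v)^2 ≠ 0 :=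
    (by fun_prop : Continuous fun v : ℝ => (t + b + 2)^2 - (y - v)^2).continuousAt.eventually_ne hD
  exact deriv_deriv_eq_of_eventually_hasDerivAt (hD_near.mono fun _ => hasDerivAt_zfun_snd)
    (hasDerivAt_zfunDx_snd hD)

end

theorem Fz_coefficient_general (t x b y s : ℝ) (ht : -1 < t)
    (hD : (t + b + 2)^2 - (y - x)^2 ≠ 0) :
    deriv (deriv (fun t' => zfun t' x b y)) t - deriv (deriv (fun x' => zfun t x' b y)) x
      + (1 - s) * (1 + t)⁻¹ * deriv (fun t' => zfun t' x b y) t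
      + 2 * (s - 1) * ((t + b + 2)^2 - (y - x)^2)⁻¹ *
          ((t + b + 2) * deriv (fun t' => zfun t' x b y) t
            - (y - x) * deriv (fun x' => zfun t x' b y) x)
      = 4 * (1 + b) * (1 - (2 - s) * zfun t x b y)
          / ((1 + t) * ((t + b + 2)^2 - (y - x)^2)) := by
  have hT : 1 + t ≠ 0 := by linarith
  rw [deriv_deriv_zfun_fst hD, deriv_deriv_zfun_snd hD, (hasDerivAt_zfun_fst hD).deriv,
    (hasDerivAt_zfun_snd hD).deriv, zfun_eq_one_sub hD, zfunDt, zfunDx]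
  field_simp
  ring

theorem Fz_coefficient (t x b y s : ℝ) (ht : -1 < t) (hb : -1 < b)
    (hD : (t + b + 2)^2 - (y - x)^2 ≠ 0) :
    deriv (deriv (fun t' => zfun t' x b y)) t - deriv (deriv (fun x' => zfun t x' b y)) x
      + (1 - s) * (1 + t)⁻¹ * deriv (fun t' => zfun t' x b y) t
      + 2 * (s - 1) * ((t + b + 2)^2 - (y - x)^2)⁻¹ *
          ((t + b + 2) * deriv (fun t' => zfun t' x b y) t
            - (y - x) * deriv (fun x' => zfun t x' b y) x)
      = 4 * (1 + b) * (1 - (2 - s) * zfun t x b y)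
          / ((1 + t) * ((t + b + 2)^2 - (y - x)^2)) :=
  Fz_coefficient_general t x b y s ht hD
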